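/- Let N be a normal operator on H which is fundamentally reducible: there is a fundamental decomposition H = H₊ [⊕] H₋ with H₊ uniformly positive, H₋ uniformly negative, and both invariant under N. Then N is similar to a normal operator in a Hilbert space; in particular, every point of σ_ap(N) contained in σ(N|H₊) \ σ(N|H₋) is a spectral point of positive type of N. -/

import Mathlib

/-!
Since `N` commutes with `J`, so does `N*`, and the `J`-adjoint `J N* J` is just `N*`; hence `N` is
normal. For the spectral claim let `P = (1 - J)/2` be the projection onto `H₋`. It commutes with
`N`, so if `l - N` is invertible on `H₋` the `H₋`-components `P xₙ` of every approximate
eigensequence `xₙ` for `l` tend to `0`. Since `J` is unitary,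
`[xₙ, xₙ] = ‖xₙ‖² - 2 ‖P xₙ‖² → 1`, so `l` is of positive type.
-/

open Filter Topology ContinuousLinearMap

noncomputable section

variable {H : Type*} [NormedAddCommGroup H] [InnerProductSpace ℂ H] [CompleteSpace H]

def kadj (J T : H →L[ℂ] H) : H →L[ℂ] H := J ∘L (ContinuousLinearMap.adjoint T) ∘L J

def ApproxEig (T : H →L[ℂ] H) (l : ℂ) (x : ℕ → H) : Prop :=
  (∀ n, ‖x n‖ = 1) ∧ Tendsto (fun n => T (x n) - l • x n) atTop (nhds 0)

def approxSpec (T : H →L[ℂ] H) : Set ℂ := {l | ∃ x : ℕ → H, ApproxEig T l x}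

def posType (J T : H →L[ℂ] H) : Set ℂ :=
  {l | l ∈ approxSpec T ∧ ∀ x : ℕ → H, ApproxEig T l x →
      0 < Filter.liminf (fun n => (inner ℂ (J (x n)) (x n) : ℂ).re) Filter.atTop}

/-- `z` belongs to the resolvent set of the restriction of `T` to the range of the
projection `P` (an invariant subspace): `z - T` is invertible in the corner algebra `P L(H) P`. -/
def cornerInv (P T : H →L[ℂ] H) (z : ℂ) : Prop :=
  ∃ S : H →L[ℂ] H, P ∘L S ∘L P = S ∧ (z • (1 : H →L[ℂ] H) - T) ∘L S = P ∧
    S ∘L ((z • (1 : H →L[ℂ] H) - T) ∘L P) = P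

namespace ContinuousLinearMap

variable {J N : H →L[ℂ] H}

lemma comp_adjoint_comm_of_comp_comm (hJ : adjoint J = J) (hNJ : N ∘L J = J ∘L N) :
    J ∘L adjoint N = adjoint N ∘L J := by
  simpa only [adjoint_comp, hJ] using congrArg adjoint hNJ

lemma norm_apply_of_adjoint_eq_of_comp_self (hJ : adjoint J = J) (hJ2 : J ∘L J = 1) (y : H) :
    ‖J y‖ = ‖y‖ := by
  have hinner : inner ℂ (J y) (J y) = inner ℂ y y := by
    rw [← adjoint_inner_right, hJ, ← comp_apply, hJ2, one_apply_eq_self]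
  rw [norm_eq_sqrt_re_inner (𝕜 := ℂ), hinner, ← norm_eq_sqrt_re_inner]

lemma re_inner_apply_self_eq (hJ : adjoint J = J) (hJ2 : J ∘L J = 1) (y : H) :
    (inner ℂ (J y) y).re = ‖y‖ ^ 2 - 2 * ‖((2⁻¹ : ℂ) • (1 - J)) y‖ ^ 2 := by
  have hP : ‖((2⁻¹ : ℂ) • (1 - J)) y‖ = 2⁻¹ * ‖y - J y‖ := by
    simp [norm_smul]
  have hsq := norm_sub_sq (𝕜 := ℂ) y (J y)
  rw [norm_apply_of_adjoint_eq_of_comp_self hJ hJ2, inner_re_symm, RCLike.re_to_complex] at hsq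
  rw [hP]
  nlinarith [hsq]

lemma tendsto_apply_zero_of_leftInverse_comp {E : Type*} [NormedAddCommGroup E]
    [NormedSpace ℂ E] {P S T : E →L[ℂ] E} {z : ℂ} {x : ℕ → E} (hPT : P ∘L T = T ∘L P)
    (hS : S ∘L ((z • (1 : E →L[ℂ] E) - T) ∘L P) = P)
    (hx : Tendsto (fun n => T (x n) - z • x n) atTop (𝓝 0)) :
    Tendsto (fun n => P (x n)) atTop (𝓝 0) := by
  have hPx : ∀ n, P (x n) = -(S ∘L P) (T (x n) - z • x n) := fun n => by
    conv_lhs => rw [← hS]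
    have hcomm := congrArg (· (x n)) hPT
    simp only [comp_apply, sub_apply, smul_apply, one_apply_eq_self, map_sub, map_smul] at hcomm ⊢
    rw [hcomm, neg_sub]
  simpa only [hPx, map_zero, neg_zero, Function.comp_def] using
    (((S ∘L P).continuous.tendsto 0).comp hx).neg

end ContinuousLinearMap

section

variable {J N : H →L[ℂ] H}

lemma kadj_eq_adjoint_of_comp_comm (hJ : adjoint J = J) (hJ2 : J ∘L J = 1)
    (hNJ : N ∘L J = J ∘L N) : kadj J N = adjoint N := by
  rw [kadj, ← comp_assoc, comp_adjoint_comm_of_comp_comm hJ hNJ, comp_assoc, hJ2]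
  rfl

lemma tendsto_re_inner_apply_self_one (hJ : adjoint J = J) (hJ2 : J ∘L J = 1)
    {x : ℕ → H} (hx : ∀ n, ‖x n‖ = 1)
    (hPx : Tendsto (fun n => ((2⁻¹ : ℂ) • (1 - J)) (x n)) atTop (𝓝 0)) :
    Tendsto (fun n => (inner ℂ (J (x n)) (x n)).re) atTop (𝓝 1) := by
  have hlim : Tendsto (fun n => ‖x n‖ ^ 2 - 2 * ‖((2⁻¹ : ℂ) • (1 - J)) (x n)‖ ^ 2) atTop
      (𝓝 (1 ^ 2 - 2 * ‖(0 : H)‖ ^ 2)) := by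
    simpa only [hx] using tendsto_const_nhds.sub ((hPx.norm.pow 2).const_mul 2)
  simpa [re_inner_apply_self_eq hJ hJ2] using hlim

lemma mem_posType_of_cornerInv (hJ : adjoint J = J) (hJ2 : J ∘L J = 1)
    (hNJ : N ∘L J = J ∘L N) {l : ℂ} (hl : l ∈ approxSpec N)
    (hinv : cornerInv ((2⁻¹ : ℂ) • (1 - J)) N l) : l ∈ posType J N := by
  have hPN : ((2⁻¹ : ℂ) • (1 - J)) ∘L N = N ∘L ((2⁻¹ : ℂ) • (1 - J)) := by
    rw [smul_comp, comp_smul, sub_comp, comp_sub, hNJ]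
    rfl
  obtain ⟨S, -, -, hS⟩ := hinv
  refine ⟨hl, fun x hx => ?_⟩
  have hPx := tendsto_apply_zero_of_leftInverse_comp hPN hS hx.2
  rw [(tendsto_re_inner_apply_self_one hJ hJ2 hx.1 hPx).liminf_eq]
  exact one_pos

end

theorem fundamentally_reducible_normal (J N : H →L[ℂ] H)
    (hJ : ContinuousLinearMap.adjoint J = J) (hJ2 : J ∘L J = 1)
    (hN : N ∘L kadj J N = kadj J N ∘L N)
    -- fundamental reducibility: the fundamental decomposition H = H₊ [⊕] H₋,
    -- H₊ = ran((1+J)/2), H₋ = ran((1-J)/2), is N-invariant, i.e. N commutes with J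
    (hNJ : N ∘L J = J ∘L N) :
    (N ∘L ContinuousLinearMap.adjoint N = ContinuousLinearMap.adjoint N ∘L N) ∧
      ∀ l ∈ approxSpec N,
        ¬ cornerInv ((2⁻¹ : ℂ) • (1 + J)) N l →
        cornerInv ((2⁻¹ : ℂ) • (1 - J)) N l →
        l ∈ posType J N := by
  refine ⟨?_, fun l hl _ hinv => mem_posType_of_cornerInv hJ hJ2 hNJ hl hinv⟩
  rwa [kadj_eq_adjoint_of_comp_comm hJ hJ2 hNJ] at hN
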